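/- arXiv:1708.08709 — 8 statements merged into one kernel-verified Lean document; each statement's English description precedes it below -/
import Mathlib

section
/- For any subspace V of the vector space K⟨G⟩ spanned by a well-ordered set G, there exists a unique reduced basis of V, i.e. a basis B such that every element of B has leading coefficient 1, and for any two distinct elements e, e' of B, the leading term of e' does not appear in the support of e. -/
open Finsupp

variable {K G : Type*} [Field K] [LinearOrder G] [WellFoundedLT G]

/-- `B` is a reduced basis of the subspace `V` of `K⟨G⟩`: it is a linearly independent
spanning set of `V`, every element has leading coefficient `1`, and the leading term of one
element never appears in the support of another. -/
def IsReducedBasis (V : Submodule K (G →₀ K)) (B : Set (G →₀ K)) : Prop :=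
  LinearIndependent K ((↑) : B → G →₀ K) ∧ Submodule.span K B = V ∧
    (∀ e ∈ B, ∀ m : G, e.support.max = (m : WithBot G) → e m = 1) ∧
    (∀ e ∈ B, ∀ e' ∈ B, e ≠ e' → ∀ m : G, e'.support.max = (m : WithBot G) → m ∉ e.support)

/-!
Let `L ⊆ G` be the set of leading terms of nonzero elements of `V`. An element of `V` that
vanishes on `L` is zero, so for each `m ∈ L` there is at most one `v ∈ V` with leading term `m`
whose restriction to `L` is the indicator of `m`. Such a `v` exists by well-founded induction on
`m`: subtract from a monic element with leading term `m` the multiples of the already constructed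
elements for the smaller leading terms in its support. These elements form a reduced basis.
Conversely, in a reduced basis `B` the leading term of a combination `∑ c_b b` is the largest
leading term of a `b` with `c_b ≠ 0`, so every element of `L` is the leading term of some `b ∈ B`,
which forces every `b ∈ B` to be one of the elements above.
-/

namespace Finsupp

variable {ι M : Type*} [LinearOrder ι] [Zero M]

theorem support_max_eq_coe_iff {v : ι →₀ M} {m : ι} :
    v.support.max = (m : WithBot ι) ↔ v m ≠ 0 ∧ ∀ g, m < g → v g = 0 := by
  refine ⟨fun h => ⟨mem_support_iff.1 (Finset.mem_of_max h),
    fun g hg => notMem_support_iff.1 (Finset.notMem_of_max_lt hg h)⟩, fun ⟨hm, hlt⟩ => ?_⟩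
  refine le_antisymm (Finset.max_le fun g hg => ?_) (Finset.le_max (mem_support_iff.2 hm))
  exact WithBot.coe_le_coe.2 (not_lt.1 fun h => mem_support_iff.1 hg (hlt g h))

end Finsupp

section ReducedSet

variable {ι R : Type*} [LinearOrder ι] [Semiring R]

def IsReducedSet (B : Set (ι →₀ R)) : Prop :=
  (∀ e ∈ B, ∀ m : ι, e.support.max = (m : WithBot ι) → e m = 1) ∧
    (∀ e ∈ B, ∀ e' ∈ B, e ≠ e' → ∀ m : ι, e'.support.max = (m : WithBot ι) → m ∉ e.support)

namespace IsReducedSet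

variable {B : Set (ι →₀ R)} (hB : IsReducedSet B)
include hB

theorem sum_apply_of_support_max_eq {c : (ι →₀ R) →₀ R} (hc : ↑c.support ⊆ B)
    {b : ι →₀ R} (hb : b ∈ B) {m : ι} (hm : b.support.max = (m : WithBot ι)) :
    (c.sum fun e r => r • e) m = c b := by
  rw [Finsupp.sum, finsetSum_apply, Finset.sum_eq_single b, Finsupp.smul_apply,
    hB.1 b hb m hm, smul_eq_mul, mul_one]
  · intro e he hne
    rw [Finsupp.smul_apply, notMem_support_iff.1 (hB.2 e (hc he) b hb hne m hm), smul_zero]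
  · intro hcb
    rw [notMem_support_iff.1 hcb, zero_smul, Finsupp.zero_apply]

theorem linearIndepOn_id (h0 : (0 : ι →₀ R) ∉ B) : LinearIndepOn R id B := by
  rw [linearIndepOn_iffₛ]
  intro f hf g hg hfg
  ext b
  by_cases hb : b ∈ B
  · obtain ⟨m, hm⟩ := Finset.max_of_nonempty (support_nonempty_iff.2 (ne_of_mem_of_not_mem hb h0))
    have hfgm := congrArg (· m) hfg
    simp only [linearCombination_apply, id] at hfgm
    rwa [hB.sum_apply_of_support_max_eq ((mem_supported R f).1 hf) hb hm,
      hB.sum_apply_of_support_max_eq ((mem_supported R g).1 hg) hb hm] at hfgm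
  · rw [notMem_support_iff.1 fun h => hb ((mem_supported R f).1 hf h),
      notMem_support_iff.1 fun h => hb ((mem_supported R g).1 hg h)]

theorem exists_mem_support_max_eq {v : ι →₀ R} (hv : v ∈ Submodule.span R B) {m : ι}
    (hm : v.support.max = (m : WithBot ι)) : ∃ b ∈ B, b.support.max = (m : WithBot ι) := by
  classical
  obtain ⟨c, hc, rfl⟩ := Submodule.mem_span_set.1 hv
  obtain ⟨hvm, hvlt⟩ := support_max_eq_coe_iff.1 hm
  obtain ⟨e, he, hem⟩ : ∃ e ∈ c.support, e m ≠ 0 := by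
    by_contra! h
    refine hvm ?_
    rw [Finsupp.sum, finsetSum_apply]
    exact Finset.sum_eq_zero fun e he => by rw [Finsupp.smul_apply, h e he, smul_zero]
  obtain ⟨b, hb, hbmax⟩ := c.support.exists_max_image (fun e => e.support.max) ⟨e, he⟩
  have hmb : (m : WithBot ι) ≤ b.support.max :=
    (Finset.le_max (mem_support_iff.2 hem)).trans (hbmax e he)
  obtain ⟨m', hm'⟩ := WithBot.ne_bot_iff_exists.1 (ne_bot_of_le_ne_bot WithBot.coe_ne_bot hmb)
  have hvm' : (c.sum fun e r => r • e) m' = c b :=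
    hB.sum_apply_of_support_max_eq hc (hc hb) hm'.symm
  have hm'm : m' ≤ m := not_lt.1 fun h => mem_support_iff.1 hb (hvm' ▸ hvlt m' h)
  rw [← hm'] at hmb
  exact ⟨b, hc hb, hm' ▸ congrArg _ (le_antisymm hm'm (WithBot.coe_le_coe.1 hmb))⟩

end IsReducedSet

end ReducedSet

section ReducedMember

variable {ι R : Type*} [LinearOrder ι] [Ring R] (V : Submodule R (ι →₀ R))

def leadingTerms : Set ι := {m | ∃ v ∈ V, v.support.max = (m : WithBot ι)}

def IsReducedMember (m : ι) (v : ι →₀ R) : Prop :=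
  v ∈ V ∧ v.support.max = (m : WithBot ι) ∧ ∀ g ∈ leadingTerms V, v g = if g = m then 1 else 0

noncomputable def reducedMember (m : ι) : ι →₀ R := Classical.epsilon (IsReducedMember V m)

def reducedMembers : Set (ι →₀ R) := {v | ∃ m, IsReducedMember V m v}

variable {V}

theorem eq_zero_of_forall_leadingTerms {v : ι →₀ R} (hv : v ∈ V)
    (h : ∀ g ∈ leadingTerms V, v g = 0) : v = 0 := by
  by_contra hv0
  obtain ⟨m, hm⟩ := Finset.max_of_nonempty (support_nonempty_iff.2 hv0)
  exact (support_max_eq_coe_iff.1 hm).1 (h m ⟨v, hv, hm⟩)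

theorem isReducedMember_reducedMember {m : ι} (h : ∃ v, IsReducedMember V m v) :
    IsReducedMember V m (reducedMember V m) :=
  Classical.epsilon_spec h

namespace IsReducedMember

variable {m : ι} {v : ι →₀ R} (h : IsReducedMember V m v)
include h

theorem mem_leadingTerms : m ∈ leadingTerms V := ⟨v, h.1, h.2.1⟩

theorem apply_self : v m = 1 := by
  rw [h.2.2 m h.mem_leadingTerms, if_pos rfl]

theorem unique {v' : ι →₀ R} (h' : IsReducedMember V m v') : v = v' :=
  sub_eq_zero.1 <| eq_zero_of_forall_leadingTerms (sub_mem h.1 h'.1) fun g hg => by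
    rw [Finsupp.sub_apply, h.2.2 g hg, h'.2.2 g hg, sub_self]

end IsReducedMember

theorem zero_notMem_reducedMembers : (0 : ι →₀ R) ∉ reducedMembers V :=
  fun ⟨_, h⟩ => WithBot.bot_ne_coe (support_zero (M := R) ▸ h.2.1)

theorem isReducedSet_reducedMembers : IsReducedSet (reducedMembers V) := by
  constructor
  · rintro e ⟨m₀, he⟩ m hm
    obtain rfl : m₀ = m := WithBot.coe_injective (he.2.1.symm.trans hm)
    exact he.apply_self
  · rintro e ⟨m₀, he⟩ e' ⟨m₁, he'⟩ hne m hm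
    obtain rfl : m₁ = m := WithBot.coe_injective (he'.2.1.symm.trans hm)
    rw [mem_support_iff, he.2.2 m₁ he'.mem_leadingTerms, not_not, if_neg]
    rintro rfl
    exact hne (he.unique he')

theorem sub_sum_reducedMember_apply {s : Finset ι} (hs : ∀ g ∈ s, ∃ e, IsReducedMember V g e)
    (v : ι →₀ R) {g : ι} (hg : g ∈ leadingTerms V) :
    (v - ∑ g' ∈ s, v g' • reducedMember V g') g = if g ∈ s then 0 else v g := by
  have hterm : ∀ g' ∈ s, (v g' • reducedMember V g') g = if g = g' then v g' else 0 :=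
    fun g' hg' => by
      rw [Finsupp.smul_apply, (isReducedMember_reducedMember (hs g' hg')).2.2 g hg, smul_eq_mul,
        mul_ite, mul_one, mul_zero]
  rw [Finsupp.sub_apply, finsetSum_apply, Finset.sum_congr rfl hterm, Finset.sum_ite_eq]
  split_ifs <;> simp

theorem sub_sum_reducedMember_mem {s : Finset ι} (hs : ∀ g ∈ s, ∃ e, IsReducedMember V g e)
    {v : ι →₀ R} (hv : v ∈ V) : v - ∑ g ∈ s, v g • reducedMember V g ∈ V :=
  sub_mem hv (sum_mem fun g hg => V.smul_mem _ (isReducedMember_reducedMember (hs g hg)).1)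

end ReducedMember

section DivisionRing

variable {ι k : Type*} [LinearOrder ι] [DivisionRing k] {V : Submodule k (ι →₀ k)}

theorem exists_monic_of_mem_leadingTerms {m : ι} (hm : m ∈ leadingTerms V) :
    ∃ v ∈ V, v.support.max = (m : WithBot ι) ∧ v m = 1 := by
  obtain ⟨w, hwV, hw⟩ := hm
  have hwm : w m ≠ 0 := (support_max_eq_coe_iff.1 hw).1
  refine ⟨(w m)⁻¹ • w, V.smul_mem _ hwV, ?_, ?_⟩
  · rwa [support_smul_eq (inv_ne_zero hwm)]
  · rw [Finsupp.smul_apply, smul_eq_mul, inv_mul_cancel₀ hwm]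

end DivisionRing

section ReducedBasis

omit [WellFoundedLT G]

namespace IsReducedBasis

variable {V : Submodule K (G →₀ K)} {B : Set (G →₀ K)} (hB : IsReducedBasis V B)
include hB

theorem isReducedMember {b : G →₀ K} (hb : b ∈ B) {m : G}
    (hm : b.support.max = (m : WithBot G)) : IsReducedMember V m b := by
  obtain ⟨-, hspan, hred : IsReducedSet B⟩ := hB
  refine ⟨hspan ▸ Submodule.subset_span hb, hm, fun g ⟨w, hwV, hw⟩ => ?_⟩
  obtain ⟨b', hb', hb'g⟩ := hred.exists_mem_support_max_eq (by rwa [hspan]) hw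
  split_ifs with hgm
  · exact hred.1 b hb g (hgm ▸ hm)
  · refine notMem_support_iff.1 (hred.2 b hb b' hb' ?_ g hb'g)
    rintro rfl
    exact hgm (WithBot.coe_injective (hb'g.symm.trans hm))

theorem eq_reducedMembers : B = reducedMembers V := by
  ext b
  refine ⟨fun hb => ?_, fun ⟨m, hb⟩ => ?_⟩
  · obtain ⟨m, hm⟩ := Finset.max_of_nonempty (support_nonempty_iff.2 (hB.1.ne_zero ⟨b, hb⟩))
    exact ⟨m, hB.isReducedMember hb hm⟩
  · have hbspan : b ∈ Submodule.span K B := by rw [hB.2.1]; exact hb.1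
    obtain ⟨b', hb', hm⟩ := IsReducedSet.exists_mem_support_max_eq hB.2.2 hbspan hb.2.1
    rwa [hb.unique (hB.isReducedMember hb' hm)]

end IsReducedBasis

end ReducedBasis

section WellOrdered

variable {V : Submodule K (G →₀ K)}

theorem exists_isReducedMember {m : G} (hm : m ∈ leadingTerms V) :
    ∃ v, IsReducedMember V m v := by
  classical
  induction m using WellFoundedLT.induction with
  | _ m ih =>
    obtain ⟨w, hwV, hwmax, hwm⟩ := exists_monic_of_mem_leadingTerms hm
    obtain ⟨-, hwlt⟩ := support_max_eq_coe_iff.1 hwmax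
    set s := w.support.filter fun g => g ∈ leadingTerms V ∧ g < m
    have hslt : ∀ g ∈ s, g < m := fun g hg => (Finset.mem_filter.1 hg).2.2
    have hs : ∀ g ∈ s, ∃ e, IsReducedMember V g e :=
      fun g hg => ih g (hslt g hg) (Finset.mem_filter.1 hg).2.1
    have hms : m ∉ s := fun h => lt_irrefl m (hslt m h)
    refine ⟨_, sub_sum_reducedMember_mem hs hwV, support_max_eq_coe_iff.2 ⟨?_, fun g hmg => ?_⟩,
      fun g hg => ?_⟩
    · rw [sub_sum_reducedMember_apply hs w hm, if_neg hms, hwm]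
      exact one_ne_zero
    · rw [Finsupp.sub_apply, finsetSum_apply, hwlt g hmg, zero_sub, neg_eq_zero]
      refine Finset.sum_eq_zero fun g' hg' => ?_
      have hlead := (isReducedMember_reducedMember (hs g' hg')).2.1
      rw [Finsupp.smul_apply, (support_max_eq_coe_iff.1 hlead).2 g ((hslt g' hg').trans hmg),
        smul_zero]
    · rw [sub_sum_reducedMember_apply hs w hg]
      split_ifs with hgs hgm hgm
      · exact absurd (hgm ▸ hgs) hms
      · rfl
      · rwa [hgm]
      · by_contra hwg
        refine hgs (Finset.mem_filter.2 ⟨mem_support_iff.2 hwg, hg, ?_⟩)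
        exact lt_of_le_of_ne (not_lt.1 fun h => hwg (hwlt g h)) hgm

theorem span_reducedMembers : Submodule.span K (reducedMembers V) = V := by
  refine le_antisymm (Submodule.span_le.2 fun v ⟨_, hv⟩ => hv.1) fun v hv => ?_
  classical
  set s := v.support.filter (· ∈ leadingTerms V)
  have hs : ∀ g ∈ s, ∃ e, IsReducedMember V g e :=
    fun g hg => exists_isReducedMember (Finset.mem_filter.1 hg).2
  have hzero : v - ∑ g ∈ s, v g • reducedMember V g = 0 :=
    eq_zero_of_forall_leadingTerms (sub_sum_reducedMember_mem hs hv) fun g hg => by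
      rw [sub_sum_reducedMember_apply hs v hg]
      split_ifs with hgs
      · rfl
      · by_contra hvg
        exact hgs (Finset.mem_filter.2 ⟨mem_support_iff.2 hvg, hg⟩)
  rw [sub_eq_zero.1 hzero]
  exact sum_mem fun g hg => Submodule.smul_mem _ _
    (Submodule.subset_span ⟨g, isReducedMember_reducedMember (hs g hg)⟩)

theorem isReducedBasis_reducedMembers : IsReducedBasis V (reducedMembers V) :=
  ⟨isReducedSet_reducedMembers.linearIndepOn_id zero_notMem_reducedMembers,
    span_reducedMembers, isReducedSet_reducedMembers⟩

end WellOrdered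

theorem unique_reduced_basis (V : Submodule K (G →₀ K)) :
    ∃! B : Set (G →₀ K), IsReducedBasis V B :=
  ⟨reducedMembers V, isReducedBasis_reducedMembers, fun _ hB => hB.eq_reducedMembers⟩
end

section
/- The kernel map T ↦ ker(T) is a bijection between the set RO(G,<) of reduction operators relative to (G,<) and the set of all linear subspaces of K⟨G⟩. -/
open Finsupp

variable {K G : Type*} [Field K] [LinearOrder G] [WellFoundedLT G]

/-- `T` is a reduction operator relative to `(G, <)`: an idempotent linear endomorphism of
`K⟨G⟩` such that `T g ≤ g` for every basis element `g`, i.e. `T g = g` or the leading term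
of `T g` is strictly smaller than `g`. -/
def IsRedOp (T : (G →₀ K) →ₗ[K] (G →₀ K)) : Prop :=
  T ∘ₗ T = T ∧
    ∀ g : G, T (single g 1) = single g 1 ∨ (T (single g 1)).support.max < (g : WithBot G)

/-
Write `lm V` for the set of leading monomials of the nonzero elements of a subspace `V` of
`K⟨G⟩`. Reducing leading terms against `V`, which terminates because `<` is well founded,
shows that the monomials outside `lm V` span a complement `W V` of `V`. A reduction operator
`T` fixes every monomial outside `lm (ker T)`: otherwise `g - T g` would be a kernel element
with leading monomial `g`. So its image, a complement of `ker T` containing `W (ker T)`, is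
`W (ker T)` itself, and an idempotent is determined by its image and kernel. Conversely, the
projection onto `W V` along `V` is a reduction operator with kernel `V`.
-/

open LinearMap

theorem Finsupp.support_max_add_of_lt {ι M : Type*} [LinearOrder ι] [AddMonoid M]
    {x y : ι →₀ M} (h : y.support.max < x.support.max) :
    (x + y).support.max = x.support.max := by
  classical
  obtain ⟨g, hg⟩ := WithBot.ne_bot_iff_exists.1 (bot_le.trans_lt h).ne'
  have hyg : y g = 0 := notMem_support_iff.1 (Finset.notMem_of_max_lt_coe (hg ▸ h))
  refine le_antisymm ?_ (hg ▸ Finset.le_max ?_)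
  · calc (x + y).support.max ≤ (x.support ∪ y.support).max := Finset.max_mono support_add
      _ = x.support.max := by rw [Finset.max_union, sup_eq_left.2 h.le]
  · rw [mem_support_iff, add_apply, hyg, add_zero]
    exact mem_support_iff.1 (Finset.mem_of_max hg.symm)

theorem Finsupp.support_max_single {ι M : Type*} [LinearOrder ι] [Zero M] {a : ι} {b : M}
    (hb : b ≠ 0) : (single a b).support.max = a := by
  rw [support_single a hb, Finset.max_singleton]

theorem Finsupp.supported_le_iff_single_mem {R ι : Type*} [Semiring R] {s : Set ι}
    {p : Submodule R (ι →₀ R)} : supported R R s ≤ p ↔ ∀ i ∈ s, single i 1 ∈ p := by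
  rw [supported_eq_span_single, Submodule.span_le, Set.image_subset_iff]
  rfl

def leadingMonomials (V : Submodule K (G →₀ K)) : Set G :=
  {g | ∃ v ∈ V, v.support.max = g}

section

omit [WellFoundedLT G]

theorem notMem_leadingMonomials_of_mem_supported {V : Submodule K (G →₀ K)} {w : G →₀ K}
    (hw : w ∈ supported K K (leadingMonomials V)ᶜ) {g : G} (hg : w.support.max = g) :
    g ∉ leadingMonomials V :=
  (mem_supported K w).1 hw (Finset.mem_of_max hg)

theorem disjoint_supported_compl_leadingMonomials (V : Submodule K (G →₀ K)) :
    Disjoint (supported K K (leadingMonomials V)ᶜ) V := by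
  refine Submodule.disjoint_def.2 fun u huW huV => ?_
  by_contra hu
  obtain ⟨g, hg⟩ := Finset.max_of_nonempty (support_nonempty_iff.2 hu)
  exact notMem_leadingMonomials_of_mem_supported huW hg ⟨u, huV, hg⟩

namespace IsRedOp

variable {T : (G →₀ K) →ₗ[K] (G →₀ K)}

theorem isIdempotentElem (hT : IsRedOp T) : IsIdempotentElem T :=
  hT.1

theorem apply_single_of_notMem_leadingMonomials (hT : IsRedOp T) {g : G}
    (hg : g ∉ leadingMonomials (ker T)) : T (single g 1) = single g 1 := by
  refine (hT.2 g).resolve_right fun hlt => hg ⟨single g 1 - T (single g 1), ?_, ?_⟩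
  · rw [mem_ker, map_sub, ← Module.End.mul_apply, hT.isIdempotentElem.eq, sub_self]
  · have hlt' : (-T (single g 1)).support.max < (single g (1 : K)).support.max := by
      rwa [support_neg, support_max_single one_ne_zero]
    rw [sub_eq_add_neg, support_max_add_of_lt hlt', support_max_single one_ne_zero]

end IsRedOp

end

theorem codisjoint_supported_compl_leadingMonomials (V : Submodule K (G →₀ K)) :
    Codisjoint (supported K K (leadingMonomials V)ᶜ) V := by
  set W := supported K K (leadingMonomials V)ᶜ
  rw [codisjoint_iff, eq_top_iff, ← supported_univ, supported_le_iff_single_mem]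
  intro g _
  induction g using WellFoundedLT.induction with
  | _ g ih =>
    by_cases hg : g ∈ leadingMonomials V
    · obtain ⟨v, hvV, hv⟩ := hg
      have hvg : v g ≠ 0 := mem_support_iff.1 (Finset.mem_of_max hv)
      have hlower : single g 1 - (v g)⁻¹ • v ∈ supported K K (Set.Iio g) := by
        refine (mem_supported' K _).2 fun h hh => ?_
        rcases (not_lt.1 hh).eq_or_lt with rfl | hgh
        · simp [inv_mul_cancel₀ hvg]
        · have hvh : v h = 0 := notMem_support_iff.1 (Finset.notMem_of_max_lt hgh hv)
          simp [single_eq_of_ne hgh.ne', hvh]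
      have hIio : supported K K (Set.Iio g) ≤ W ⊔ V :=
        supported_le_iff_single_mem.2 fun h hh => ih h hh trivial
      simpa using add_mem (hIio hlower) (Submodule.mem_sup_right (V.smul_mem (v g)⁻¹ hvV))
    · exact Submodule.mem_sup_left (single_mem_supported K 1 hg)

theorem isCompl_supported_compl_leadingMonomials (V : Submodule K (G →₀ K)) :
    IsCompl (supported K K (leadingMonomials V)ᶜ) V :=
  ⟨disjoint_supported_compl_leadingMonomials V, codisjoint_supported_compl_leadingMonomials V⟩

namespace IsRedOp

variable {T : (G →₀ K) →ₗ[K] (G →₀ K)}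

theorem range_eq (hT : IsRedOp T) :
    range T = supported K K (leadingMonomials (ker T))ᶜ := by
  have hle : supported K K (leadingMonomials (ker T))ᶜ ≤ range T :=
    supported_le_iff_single_mem.2 fun g hg =>
      ⟨_, hT.apply_single_of_notMem_leadingMonomials hg⟩
  refine (eq_of_le_of_inf_le_of_sup_le hle (z := ker T) ?_ ?_).symm
  · rw [hT.isIdempotentElem.isCompl.inf_eq_bot]
    exact bot_le
  · rw [(isCompl_supported_compl_leadingMonomials (ker T)).sup_eq_top]
    exact le_top

theorem ext_of_ker_eq {T' : (G →₀ K) →ₗ[K] (G →₀ K)} (hT : IsRedOp T) (hT' : IsRedOp T')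
    (h : ker T = ker T') : T = T' :=
  IsIdempotentElem.ext hT.isIdempotentElem hT'.isIdempotentElem
    ⟨by rw [hT.range_eq, hT'.range_eq, h], h⟩

end IsRedOp

theorem isRedOp_projection (V : Submodule K (G →₀ K)) :
    IsRedOp ((supported K K (leadingMonomials V)ᶜ).projection V
      (isCompl_supported_compl_leadingMonomials V)) := by
  set hW := isCompl_supported_compl_leadingMonomials V
  refine ⟨Submodule.isIdempotentElem_projection hW, fun g => ?_⟩
  by_cases hg : g ∈ leadingMonomials V
  · right
    set w := (supported K K (leadingMonomials V)ᶜ).projection V hW (single g 1)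
    have hwW : w ∈ supported K K (leadingMonomials V)ᶜ := Submodule.projection_apply_mem hW _
    -- otherwise the leading monomial of `w`, which is outside `leadingMonomials V`, also leads
    -- `single g 1 - w ∈ V`
    by_contra hge
    obtain ⟨h, hh⟩ :=
      WithBot.ne_bot_iff_exists.1 ((WithBot.bot_lt_coe g).trans_le (not_lt.1 hge)).ne'
    refine notMem_leadingMonomials_of_mem_supported hwW hh.symm ?_
    rcases (WithBot.coe_le_coe.1 (hh ▸ not_lt.1 hge)).eq_or_lt with rfl | hgh
    · exact hg
    · refine ⟨single g 1 - w, Submodule.sub_projection_mem hW _, ?_⟩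
      have hlt : (single g (1 : K)).support.max < (-w).support.max := by
        rw [support_neg, ← hh, support_max_single one_ne_zero]
        exact WithBot.coe_lt_coe.2 hgh
      rw [sub_eq_add_neg, add_comm, support_max_add_of_lt hlt, support_neg, hh]
  · exact Or.inl (Submodule.projection_apply_of_mem_left hW (single_mem_supported K 1 hg))

theorem exists_isRedOp_ker_eq (V : Submodule K (G →₀ K)) :
    ∃ T : (G →₀ K) →ₗ[K] (G →₀ K), IsRedOp T ∧ ker T = V :=
  ⟨_, isRedOp_projection V, Submodule.ker_projection _⟩

theorem kernel_map_bijective :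
    Function.Bijective
      (fun T : {T : (G →₀ K) →ₗ[K] (G →₀ K) // IsRedOp T} => LinearMap.ker T.1) := by
  refine ⟨fun T T' h => Subtype.ext (T.2.ext_of_ker_eq T'.2 h), fun V => ?_⟩
  obtain ⟨T, hT, hker⟩ := exists_isRedOp_ker_eq V
  exact ⟨⟨T, hT⟩, hker⟩
end

section
/- Let T be a reduction operator relative to (G,<). Then the set {g − T(g) : g ∈ G, T(g) ≠ g} is a basis of ker(T). In particular, every v ∈ ker(T) has a unique decomposition v = Σ λ_g (g − T(g)) over T-reducible elements g. -/
open Finsupp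

variable {K G : Type*} [Field K] [LinearOrder G] [WellFoundedLT G]

/-!
Since `T` is idempotent, `ker T = range (id - T)`, which is spanned by the vectors `g - T g`;
those with `g` irreducible vanish. For `g` reducible, `g - T g` has leading term `g` with
coefficient `1`, and vectors with distinct leading terms are linearly independent: in a vanishing
finite combination, the coefficient of the largest leading term is the coefficient of that
monomial in the sum, hence zero.
-/

theorem Finsupp.linearIndependent_of_triangular {ι σ R : Type*} [LinearOrder σ] [Ring R]
    [NoZeroDivisors R] {v : ι → σ →₀ R} {e : ι → σ} (he : Function.Injective e)
    (hlead : ∀ i, v i (e i) ≠ 0) (hupper : ∀ i x, e i < x → v i x = 0) :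
    LinearIndependent R v := by
  classical
  rw [linearIndependent_iff']
  intro s
  induction s using Finset.induction_on_max_value e with
  | empty => simp
  | insert a s has hmax ih =>
    intro c hsum
    have hlt : ∀ i ∈ s, e i < e a := fun i hi =>
      (hmax i hi).lt_of_ne (he.ne (ne_of_mem_of_not_mem hi has))
    have hca : c a = 0 := by
      have hsum_a := congr($hsum (e a))
      rw [Finset.sum_insert has, add_apply, finsetSum_apply,
        Finset.sum_eq_zero fun i hi => by rw [smul_apply, hupper i _ (hlt i hi), smul_zero]]
        at hsum_a
      simpa [hlead a] using hsum_a
    rw [Finset.sum_insert has, hca, zero_smul, zero_add] at hsum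
    intro i hi
    rcases Finset.mem_insert.1 hi with rfl | hi
    exacts [hca, ih c hsum i hi]

theorem Submodule.span_range_subtype_eq_of_eq_zero {ι R M : Type*} [Semiring R] [AddCommMonoid M]
    [Module R M] {v : ι → M} {P : ι → Prop} (hv : ∀ i, ¬P i → v i = 0) :
    span R (Set.range fun i : {i // P i} => v i) = span R (Set.range v) := by
  refine le_antisymm (span_mono (Set.range_comp_subset_range _ v)) (span_le.2 ?_)
  rintro _ ⟨i, rfl⟩
  by_cases hi : P i
  · exact subset_span ⟨⟨i, hi⟩, rfl⟩
  · simp [hv i hi]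

theorem LinearMap.range_eq_span_range_comp_basis {ι R M N : Type*} [Semiring R] [AddCommMonoid M]
    [Module R M] [AddCommMonoid N] [Module R N] (b : Module.Basis ι R M) (f : M →ₗ[R] N) :
    range f = Submodule.span R (Set.range (f ∘ b)) := by
  rw [range_eq_map, ← b.span_eq, Submodule.map_span, Set.range_comp]

theorem LinearMap.IsIdempotentElem.ker_eq_span_range_sub {ι R M : Type*} [Ring R] [AddCommGroup M]
    [Module R M] {p : M →ₗ[R] M} (hp : IsIdempotentElem p) (b : Module.Basis ι R M) :
    ker p = Submodule.span R (Set.range fun i => b i - p (b i)) := by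
  rw [IsIdempotentElem.ker_eq_range hp, range_eq_span_range_comp_basis b]
  rfl

theorem IsRedOp.apply_single_apply_eq_zero {K G : Type*} [Field K] [LinearOrder G]
    {T : (G →₀ K) →ₗ[K] (G →₀ K)} (hT : IsRedOp T) {g x : G}
    (hg : T (single g 1) ≠ single g 1) (hx : g ≤ x) : T (single g 1) x = 0 := by
  refine notMem_support_iff.1 fun hmem => ?_
  have hlt := (Finset.le_max hmem).trans_lt ((hT.2 g).resolve_left hg)
  exact (WithBot.coe_lt_coe.1 hlt).not_ge hx

theorem IsRedOp.isIdempotentElem_s2 {K G : Type*} [Field K] [LinearOrder G]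
    {T : (G →₀ K) →ₗ[K] (G →₀ K)} (hT : IsRedOp T) : IsIdempotentElem T :=
  hT.1

/-- The family `g - T g`, indexed by the `T`-reducible elements `g`, is a basis of `ker T`:
it is linearly independent and spans `ker T`. -/
theorem kernel_basis (T : (G →₀ K) →ₗ[K] (G →₀ K)) (hT : IsRedOp T) :
    LinearIndependent K
      (fun g : {g : G // T (single g 1) ≠ single g 1} =>
        single g.1 (1 : K) - T (single g.1 1)) ∧
    Submodule.span K
      (Set.range (fun g : {g : G // T (single g 1) ≠ single g 1} =>
        single g.1 (1 : K) - T (single g.1 1))) = LinearMap.ker T := by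
  constructor
  · refine Finsupp.linearIndependent_of_triangular Subtype.val_injective (fun g => ?_)
      fun g x hx => ?_
    · simp [hT.apply_single_apply_eq_zero g.2 le_rfl]
    · rw [Finsupp.sub_apply, single_eq_of_ne hx.ne', hT.apply_single_apply_eq_zero g.2 hx.le,
        sub_zero]
  · rw [LinearMap.IsIdempotentElem.ker_eq_span_range_sub hT.isIdempotentElem_s2
      Finsupp.basisSingleOne, Finsupp.coe_basisSingleOne]
    exact Submodule.span_range_subtype_eq_of_eq_zero (v := fun g => single g 1 - T (single g 1))
      fun g hg => sub_eq_zero.2 (not_not.1 hg).symm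
end

section
/- Let T₁ and T₂ be reduction operators relative to (G,<) with ker(T₂) ⊆ ker(T₁). Then every T₁-normal form is a T₂-normal form, i.e. {g ∈ G : T₁(g) = g} ⊆ {g ∈ G : T₂(g) = g}. -/
open Finsupp

variable {K G : Type*} [Field K] [LinearOrder G] [WellFoundedLT G]

/-! A reduction operator is triangular: it maps each `g` to `g` or to a combination of smaller
elements. Hence it preserves the span of any lower set, and if `T₂` reduces `g` strictly, then
`g = T₁ g = T₁ (T₂ g)` (as `g - T₂ g ∈ ker T₂ ⊆ ker T₁`) would lie in the span of `Set.Iio g`. -/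

namespace IsRedOp

omit [WellFoundedLT G]

variable {T : (G →₀ K) →ₗ[K] (G →₀ K)}

theorem apply_single_eq_or_mem_supported_Iio (hT : IsRedOp T) (g : G) :
    T (single g 1) = single g 1 ∨ T (single g 1) ∈ supported K K (Set.Iio g) :=
  (hT.2 g).imp_right fun hlt _ ha => WithBot.coe_lt_coe.mp ((Finset.le_max ha).trans_lt hlt)

theorem map_supported_le {s : Set G} (hT : IsRedOp T) (hs : IsLowerSet s) :
    (supported K K s).map T ≤ supported K K s := by
  rw [supported_eq_span_single, Submodule.map_span_le]
  rintro _ ⟨b, hb, rfl⟩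
  rcases hT.apply_single_eq_or_mem_supported_Iio b with hfix | hlt
  · rw [hfix]
    exact Submodule.subset_span ⟨b, hb, rfl⟩
  · rw [← supported_eq_span_single]
    exact supported_mono (fun _ ha => hs ha.le hb) hlt

theorem sub_apply_mem_ker (hT : IsRedOp T) (x : G →₀ K) : x - T x ∈ LinearMap.ker T := by
  rw [LinearMap.mem_ker, map_sub, ← LinearMap.comp_apply, hT.1, sub_self]

end IsRedOp

omit [WellFoundedLT G] in
theorem single_notMem_supported_Iio (g : G) : single g (1 : K) ∉ supported K K (Set.Iio g) :=
  fun hg => lt_irrefl g (hg (by simp))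

/-- If `ker T₂ ⊆ ker T₁` (i.e. `T₁ ⪯ T₂`), then every `T₁`-normal form is a `T₂`-normal form. -/
theorem normal_forms_mono (T₁ T₂ : (G →₀ K) →ₗ[K] (G →₀ K))
    (h₁ : IsRedOp T₁) (h₂ : IsRedOp T₂)
    (h : LinearMap.ker T₂ ≤ LinearMap.ker T₁) :
    {g : G | T₁ (single g 1) = single g 1} ⊆ {g : G | T₂ (single g 1) = single g 1} := by
  intro g (hg : T₁ (single g 1) = single g 1)
  refine (h₂.apply_single_eq_or_mem_supported_Iio g).resolve_right fun hlt => ?_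
  have hfactor : T₁ (T₂ (single g 1)) = single g 1 := by
    have := h (h₂.sub_apply_mem_ker (single g 1))
    rwa [LinearMap.mem_ker, map_sub, hg, sub_eq_zero, eq_comm] at this
  refine single_notMem_supported_Iio (K := K) g ?_
  rw [← hfactor]
  exact h₁.map_supported_le (isLowerSet_Iio g) ⟨_, hlt, rfl⟩
end

section
/- Let T₁, …, Tᵢ be reduction operators relative to (G,<), let ι : syz(T₁,…,T_{i−1}) → syz(T₁,…,Tᵢ) be the map (v₁,…,v_{i−1}) ↦ (v₁,…,v_{i−1},0), and let π̃ : syz(T₁,…,Tᵢ) → syz(U_{i−1}, Tᵢ) be the map (v₁,…,vᵢ) ↦ (v₁+⋯+v_{i−1}, vᵢ), where U_{i−1} = T₁ ∧ ⋯ ∧ T_{i−1}. Then the image of ι equals the kernel of π̃. -/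
open Finsupp

variable {K G : Type*} [Field K] [LinearOrder G] [WellFoundedLT G]

/-- The set of syzygies for the family `T₁, …, T_k`: tuples `(v₁, …, v_k)` with
`v_j ∈ ker T_j` and `v₁ + ⋯ + v_k = 0`. -/
def SyzSet {K G : Type*} [Field K] [LinearOrder G] {k : ℕ}
    (T : Fin k → (G →₀ K) →ₗ[K] (G →₀ K)) : Set (Fin k → (G →₀ K)) :=
  {v | (∀ j, T j (v j) = 0) ∧ ∑ j, v j = 0}

theorem Fin.image_snoc_zero {α : Type*} [Zero α] {n : ℕ} (S : Set (Fin n → α)) :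
    (fun v : Fin n → α => Fin.snoc (α := fun _ => α) v 0) '' S =
      {w | (fun j : Fin n => w j.castSucc) ∈ S ∧ w (Fin.last n) = 0} := by
  ext w
  constructor
  · rintro ⟨v, hv, rfl⟩
    simpa using hv
  · rintro ⟨hw, hlast⟩
    exact ⟨_, hw, by rw [← hlast]; exact Fin.snoc_init_self w⟩

theorem mem_syzSet_iff_of_last_eq_zero {K G : Type*} [Field K] [LinearOrder G] {n : ℕ}
    (T : Fin (n + 1) → (G →₀ K) →ₗ[K] (G →₀ K))
    {w : Fin (n + 1) → (G →₀ K)} (hlast : w (Fin.last n) = 0) :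
    w ∈ SyzSet T ↔ (fun j : Fin n => w j.castSucc) ∈ SyzSet (fun j : Fin n => T j.castSucc) := by
  simp only [SyzSet, Set.mem_ofPred_eq, Fin.forall_fin_succ', Fin.sum_univ_castSucc, hlast,
    map_zero, add_zero, and_true]

theorem image_iota_eq_ker_pi_general (n : ℕ) (T : Fin (n + 1) → (G →₀ K) →ₗ[K] (G →₀ K)) :
    (fun v : Fin n → (G →₀ K) => Fin.snoc v 0) ''
        SyzSet (fun j : Fin n => T j.castSucc) =
      {v ∈ SyzSet T | (∑ j : Fin n, v j.castSucc) = 0 ∧ v (Fin.last n) = 0} := by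
  rw [Fin.image_snoc_zero]
  ext w
  constructor
  · rintro ⟨hw, hlast⟩
    exact ⟨(mem_syzSet_iff_of_last_eq_zero T hlast).2 hw, hw.2, hlast⟩
  · rintro ⟨hw, -, hlast⟩
    exact ⟨(mem_syzSet_iff_of_last_eq_zero T hlast).1 hw, hlast⟩

/-- The image of `ι : syz(T₁,…,T_{i-1}) → syz(T₁,…,Tᵢ)` (appending a zero last coordinate)
is exactly the kernel of `π̃ : syz(T₁,…,Tᵢ) → syz(U_{i-1}, Tᵢ)`,
`(v₁,…,vᵢ) ↦ (v₁+⋯+v_{i-1}, vᵢ)`. -/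
theorem image_iota_eq_ker_pi (n : ℕ) (T : Fin (n + 1) → (G →₀ K) →ₗ[K] (G →₀ K))
    (hT : ∀ i, IsRedOp (T i)) :
    (fun v : Fin n → (G →₀ K) => Fin.snoc v 0) ''
        SyzSet (fun j : Fin n => T j.castSucc) =
      {v ∈ SyzSet T | (∑ j : Fin n, v j.castSucc) = 0 ∧ v (Fin.last n) = 0} :=
  image_iota_eq_ker_pi_general n T
end

section
/- Let T₁, …, Tᵢ be reduction operators relative to (G,<), let U = T₁ ∧ ⋯ ∧ T_{i−1}, and let π̃ : syz(T₁,…,Tᵢ) → syz(U, Tᵢ) be given by (v₁,…,vᵢ) ↦ (v₁+⋯+v_{i−1}, vᵢ). Then π̃ is surjective, and syz(T₁,…,Tᵢ) decomposes as the direct sum of the image of the inclusion syz(T₁,…,T_{i−1}) ↪ syz(T₁,…,Tᵢ) (appending a zero last coordinate) and any subspace mapped isomorphically by π̃ onto syz(U, Tᵢ). In particular, syz(T₁,…,Tᵢ)/syz(T₁,…,T_{i−1}) ≅ syz(U, Tᵢ) ≅ ker(U ∨ Tᵢ). -/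
open Finsupp

variable {K G : Type*} [Field K] [LinearOrder G] [WellFoundedLT G]

/-- The space of syzygies for the family `T₁, …, T_k`, as a submodule of the product:
tuples `(v₁, …, v_k)` with `v_j ∈ ker T_j` and `v₁ + ⋯ + v_k = 0`. -/
noncomputable def SyzMod {k : ℕ} (T : Fin k → (G →₀ K) →ₗ[K] (G →₀ K)) :
    Submodule K (Fin k → (G →₀ K)) :=
  (⨅ j, (LinearMap.ker (T j)).comap (LinearMap.proj j)) ⊓
    LinearMap.ker (∑ j, (LinearMap.proj j : (Fin k → (G →₀ K)) →ₗ[K] (G →₀ K)))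

/-- The space of syzygies for a pair `(T₁, T₂)`. -/
noncomputable def syzPair (T₁ T₂ : (G →₀ K) →ₗ[K] (G →₀ K)) :
    Submodule K ((G →₀ K) × (G →₀ K)) :=
  ((LinearMap.ker T₁).prod (LinearMap.ker T₂)) ⊓
    LinearMap.ker (LinearMap.fst K (G →₀ K) (G →₀ K) + LinearMap.snd K (G →₀ K) (G →₀ K))

/-- The linear inclusion `ι` appending a zero last coordinate. -/
noncomputable def iotaL (n : ℕ) : (Fin n → (G →₀ K)) →ₗ[K] (Fin (n + 1) → (G →₀ K)) where
  toFun v := Fin.snoc v 0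
  map_add' v w := by
    funext j
    refine Fin.lastCases ?_ (fun i => ?_) j <;> simp
  map_smul' c v := by
    funext j
    refine Fin.lastCases ?_ (fun i => ?_) j <;> simp

/-!
Since `ker U` is the sum of the kernels `ker T₁, …, ker Tₙ`, the first coordinate `u` of a syzygy
`(u, w)` of `(U, Tₙ₊₁)` splits as `u = v₁ + ⋯ + vₙ` with `vⱼ ∈ ker Tⱼ`, and `(v₁, …, vₙ, w)` is a
syzygy of `T` lifting it: `π̃` maps `syz(T)` onto `syz(U, Tₙ₊₁)`. On `syz(T)` its kernel consists of
the syzygies with last coordinate zero, i.e. the image of `syz(T₁, …, Tₙ)`. The direct sum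
decomposition and the isomorphism with the quotient are then linear algebra of this surjection,
and a syzygy of a pair is `(-x, x)` with `x ∈ ker U ∩ ker Tₙ₊₁`.
-/

namespace Submodule

variable {R M N : Type*} [Ring R] [AddCommGroup M] [AddCommGroup N] [Module R M] [Module R N]

theorem inf_ker_eq_bot_of_injOn {f : M →ₗ[R] N} {W : Submodule R M} (h : Set.InjOn f W) :
    W ⊓ LinearMap.ker f = ⊥ :=
  disjoint_iff.mp <| LinearMap.disjoint_ker.mpr fun _ hx hfx =>
    h hx W.zero_mem (hfx.trans (map_zero f).symm)

theorem sup_inf_ker_eq_of_map_le {f : M →ₗ[R] N} {W S : Submodule R M} (hWS : W ≤ S)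
    (h : S.map f ≤ W.map f) : W ⊔ S ⊓ LinearMap.ker f = S := by
  rw [inf_comm, ← sup_inf_assoc_of_le _ hWS,
    inf_eq_right.mpr ((LinearMap.map_le_map_iff f).mp h)]

noncomputable def quotInfKerEquivMap (f : M →ₗ[R] N) (S : Submodule R M) :
    (S ⧸ (S ⊓ LinearMap.ker f).comap S.subtype) ≃ₗ[R] S.map f :=
  (quotEquivOfEq _ _ (by
    rw [comap_inf, comap_subtype_self, top_inf_eq, LinearMap.ker_domRestrict])).trans <|
    (f.domRestrict S).quotKerEquivRange.trans
      (LinearEquiv.ofEq _ _ (LinearMap.range_domRestrict S f))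

end Submodule

section

variable {R M : Type*} [Semiring R] [AddCommMonoid M] [Module R M]

/-- The map `π̃`. -/
def syzProj (n : ℕ) : (Fin (n + 1) → M) →ₗ[R] M × M :=
  (∑ j : Fin n, (LinearMap.proj j.castSucc : (Fin (n + 1) → M) →ₗ[R] M)).prod
    (LinearMap.proj (Fin.last n))

@[simp]
theorem syzProj_apply {n : ℕ} (v : Fin (n + 1) → M) :
    syzProj (R := R) n v = (∑ j : Fin n, v j.castSucc, v (Fin.last n)) := by
  simp [syzProj]

end

section

omit [LinearOrder G] [WellFoundedLT G]

theorem mem_syzMod {k : ℕ} {T : Fin k → (G →₀ K) →ₗ[K] (G →₀ K)} {v : Fin k → (G →₀ K)} :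
    v ∈ SyzMod T ↔ (∀ j, T j (v j) = 0) ∧ ∑ j, v j = 0 := by
  simp [SyzMod, Submodule.mem_iInf]

theorem mem_syzPair {T₁ T₂ : (G →₀ K) →ₗ[K] (G →₀ K)} {w : (G →₀ K) × (G →₀ K)} :
    w ∈ syzPair T₁ T₂ ↔ T₁ w.1 = 0 ∧ T₂ w.2 = 0 ∧ w.1 + w.2 = 0 := by
  simp [syzPair, and_assoc]

theorem mem_map_iotaL {n : ℕ} {S : Fin n → (G →₀ K) →ₗ[K] (G →₀ K)}
    {v : Fin (n + 1) → (G →₀ K)} :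
    v ∈ (SyzMod S).map (iotaL n) ↔
      v (Fin.last n) = 0 ∧ (fun j : Fin n => v j.castSucc) ∈ SyzMod S := by
  constructor
  · rintro ⟨u, hu, rfl⟩
    simpa [iotaL] using hu
  · rintro ⟨hlast, hv⟩
    refine ⟨_, hv, funext fun j => Fin.lastCases ?_ (fun i => ?_) j⟩ <;> simp [iotaL, hlast]

theorem syzMod_inf_ker_syzProj {n : ℕ} (T : Fin (n + 1) → (G →₀ K) →ₗ[K] (G →₀ K)) :
    SyzMod T ⊓ LinearMap.ker (syzProj n) =
      (SyzMod fun j : Fin n => T j.castSucc).map (iotaL n) := by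
  ext v
  simp only [Submodule.mem_inf, LinearMap.mem_ker, syzProj_apply, Prod.mk_eq_zero, mem_syzMod,
    mem_map_iotaL, Fin.forall_fin_succ', Fin.sum_univ_castSucc]
  grind

theorem map_syzProj_syzMod_le {n : ℕ} (T : Fin (n + 1) → (G →₀ K) →ₗ[K] (G →₀ K))
    {U : (G →₀ K) →ₗ[K] (G →₀ K)}
    (hU : ⨆ j : Fin n, LinearMap.ker (T j.castSucc) ≤ LinearMap.ker U) :
    (SyzMod T).map (syzProj n) ≤ syzPair U (T (Fin.last n)) := by
  rintro _ ⟨v, hv, rfl⟩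
  rw [SetLike.mem_coe, mem_syzMod, Fin.sum_univ_castSucc] at hv
  rw [syzProj_apply]
  refine mem_syzPair.mpr ⟨?_, hv.1 _, hv.2⟩
  show ∑ j : Fin n, v j.castSucc ∈ LinearMap.ker U
  exact Submodule.sum_mem _ fun j _ => iSup_le_iff.mp hU j (hv.1 j.castSucc)

theorem syzPair_le_map_syzProj_syzMod {n : ℕ} (T : Fin (n + 1) → (G →₀ K) →ₗ[K] (G →₀ K))
    {U : (G →₀ K) →ₗ[K] (G →₀ K)}
    (hU : LinearMap.ker U ≤ ⨆ j : Fin n, LinearMap.ker (T j.castSucc)) :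
    syzPair U (T (Fin.last n)) ≤ (SyzMod T).map (syzProj n) := by
  rintro ⟨w₁, w₂⟩ hw
  obtain ⟨hw₁, hw₂, hsum⟩ := mem_syzPair.mp hw
  obtain ⟨f, hf, hfsum⟩ := (Submodule.mem_iSup_iff_exists_finsupp _ _).mp (hU hw₁)
  rw [Finsupp.sum_fintype _ _ fun _ => rfl] at hfsum
  refine ⟨Fin.snoc (fun j => f j) w₂, mem_syzMod.mpr ⟨fun j => ?_, ?_⟩, ?_⟩
  · refine Fin.lastCases ?_ (fun i => ?_) j
    · simpa using hw₂
    · simpa using hf i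
  · simpa [Fin.sum_univ_castSucc, hfsum] using hsum
  · simp [hfsum]

theorem map_syzProj_syzMod {n : ℕ} (T : Fin (n + 1) → (G →₀ K) →ₗ[K] (G →₀ K))
    {U : (G →₀ K) →ₗ[K] (G →₀ K)}
    (hU : LinearMap.ker U = ⨆ j : Fin n, LinearMap.ker (T j.castSucc)) :
    (SyzMod T).map (syzProj n) = syzPair U (T (Fin.last n)) :=
  le_antisymm (map_syzProj_syzMod_le T hU.ge) (syzPair_le_map_syzProj_syzMod T hU.le)

/-- Every syzygy of a pair has the form `(-x, x)` with `x ∈ ker T₁ ∩ ker T₂`. -/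
noncomputable def syzPairEquivKerInf (T₁ T₂ : (G →₀ K) →ₗ[K] (G →₀ K)) :
    syzPair T₁ T₂ ≃ₗ[K] ↥(LinearMap.ker T₁ ⊓ LinearMap.ker T₂) where
  toFun w := ⟨w.1.2, by
    rw [SetLike.mem_coe, LinearMap.mem_ker, eq_neg_of_add_eq_zero_right (mem_syzPair.mp w.2).2.2,
      map_neg, (mem_syzPair.mp w.2).1, neg_zero], (mem_syzPair.mp w.2).2.1⟩
  invFun x := ⟨(-x.1, x.1), mem_syzPair.mpr ⟨by simpa using x.2.1, x.2.2, neg_add_cancel _⟩⟩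
  map_add' _ _ := rfl
  map_smul' _ _ := rfl
  left_inv w :=
    Subtype.ext <| Prod.ext (eq_neg_of_add_eq_zero_left (mem_syzPair.mp w.2).2.2).symm rfl
  right_inv _ := rfl

end

set_option maxSynthPendingDepth 3 in
theorem syz_decomposition_general (n : ℕ) (T : Fin (n + 1) → (G →₀ K) →ₗ[K] (G →₀ K))
    (U : (G →₀ K) →ₗ[K] (G →₀ K))
    (hUker : LinearMap.ker U = ⨆ j : Fin n, LinearMap.ker (T j.castSucc)) :
    let pit : (Fin (n + 1) → (G →₀ K)) →ₗ[K] (G →₀ K) × (G →₀ K) :=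
      (∑ j : Fin n,
        (LinearMap.proj j.castSucc : (Fin (n + 1) → (G →₀ K)) →ₗ[K] (G →₀ K))).prod
        (LinearMap.proj (Fin.last n))
    (∀ w : (G →₀ K) × (G →₀ K), w ∈ syzPair U (T (Fin.last n)) →
        ∃ v ∈ SyzMod T, pit v = w) ∧
    (∀ W : Submodule K (Fin (n + 1) → (G →₀ K)), W ≤ SyzMod T →
        Set.BijOn pit (W : Set (Fin (n + 1) → (G →₀ K)))
          (syzPair U (T (Fin.last n)) : Set ((G →₀ K) × (G →₀ K))) →
        W ⊓ (SyzMod fun j : Fin n => T j.castSucc).map (iotaL n) = ⊥ ∧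
        W ⊔ (SyzMod fun j : Fin n => T j.castSucc).map (iotaL n) = SyzMod T) ∧
    Nonempty ((↥(SyzMod T) ⧸
        (((SyzMod fun j : Fin n => T j.castSucc).map (iotaL n)).comap
          (SyzMod T).subtype)) ≃ₗ[K]
      ↥(LinearMap.ker U ⊓ LinearMap.ker (T (Fin.last n)))) := by
  intro pit
  have hmap : (SyzMod T).map pit = syzPair U (T (Fin.last n)) := map_syzProj_syzMod T hUker
  rw [← syzMod_inf_ker_syzProj]
  refine ⟨fun w hw => hmap.ge hw, fun W hWS hbij => ⟨?_, ?_⟩, ⟨?_⟩⟩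
  · exact eq_bot_mono (inf_le_inf_left W inf_le_right)
      (Submodule.inf_ker_eq_bot_of_injOn hbij.injOn)
  · exact Submodule.sup_inf_ker_eq_of_map_le hWS (hmap.trans_le fun w hw => hbij.surjOn hw)
  · exact (Submodule.quotInfKerEquivMap pit (SyzMod T)).trans
      ((LinearEquiv.ofEq _ _ hmap).trans (syzPairEquivKerInf U (T (Fin.last n))))

set_option maxSynthPendingDepth 3 in
/-- `π̃` is surjective onto `syz(U, Tᵢ)`; the image of `ι` together with any
subspace of `syz(T₁,…,Tᵢ)` mapped bijectively by `π̃` onto `syz(U, Tᵢ)` gives a direct sum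
decomposition; and the quotient `syz(T₁,…,Tᵢ)/syz(T₁,…,T_{i-1})` is isomorphic to
`ker (U ∨ Tᵢ) = ker U ∩ ker Tᵢ`. -/
theorem syz_decomposition (n : ℕ) (T : Fin (n + 1) → (G →₀ K) →ₗ[K] (G →₀ K))
    (hT : ∀ i, IsRedOp (T i))
    (U : (G →₀ K) →ₗ[K] (G →₀ K)) (hU : IsRedOp U)
    (hUker : LinearMap.ker U = ⨆ j : Fin n, LinearMap.ker (T j.castSucc)) :
    let pit : (Fin (n + 1) → (G →₀ K)) →ₗ[K] (G →₀ K) × (G →₀ K) :=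
      (∑ j : Fin n,
        (LinearMap.proj j.castSucc : (Fin (n + 1) → (G →₀ K)) →ₗ[K] (G →₀ K))).prod
        (LinearMap.proj (Fin.last n))
    (∀ w : (G →₀ K) × (G →₀ K), w ∈ syzPair U (T (Fin.last n)) →
        ∃ v ∈ SyzMod T, pit v = w) ∧
    (∀ W : Submodule K (Fin (n + 1) → (G →₀ K)), W ≤ SyzMod T →
        Set.BijOn pit (W : Set (Fin (n + 1) → (G →₀ K)))
          (syzPair U (T (Fin.last n)) : Set ((G →₀ K) × (G →₀ K))) →
        W ⊓ (SyzMod fun j : Fin n => T j.castSucc).map (iotaL n) = ⊥ ∧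
        W ⊔ (SyzMod fun j : Fin n => T j.castSucc).map (iotaL n) = SyzMod T) ∧
    Nonempty ((↥(SyzMod T) ⧸
        (((SyzMod fun j : Fin n => T j.castSucc).map (iotaL n)).comap
          (SyzMod T).subtype)) ≃ₗ[K]
      ↥(LinearMap.ker U ⊓ LinearMap.ker (T (Fin.last n)))) :=
  syz_decomposition_general n T U hUker
end

section
/- Let F be a finite set of reduction operators relative to (G,<), and let C^F = (∧F) ∨ T₀, where T₀ is the reduction operator whose kernel is the span K⟨NF(F)⟩ of NF(F). Then F ∪ {C^F} is a completion of F, i.e. F ∪ {C^F} is confluent and ∧(F ∪ {C^F}) = ∧F. -/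
open Finsupp

variable {K G : Type*} [Field K] [LinearOrder G] [WellFoundedLT G]

/-- The set of `T`-normal forms. -/
def NFset (T : (G →₀ K) →ₗ[K] (G →₀ K)) : Set G :=
  {g | T (single g 1) = single g 1}

/-!
A reduction operator `T` fixes the monomial `g` exactly when no element of `ker T` has leading
monomial `g`. Let `S = NF(F)`. If `g ∈ S` is the leading monomial of some `v ∈ ker (∧F)`, reduce
the part of `v` below `g` by the operators of `F`, by well-founded induction on `(G, <)`: modulo
`ker (∧F) = Σ ker T` it becomes a combination of monomials of `S` below `g`. The result lies in
`ker (∧F) ∩ K⟨S⟩ = ker C^F` and still has leading monomial `g`, so `g ∉ NF(C^F)`.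
-/

open Set

section

omit [WellFoundedLT G]

theorem erase_mem_supported_Iio {v : G →₀ K} {g : G} (hv : v ∈ supported K K (Iic g)) :
    erase g v ∈ supported K K (Iio g) := by
  classical
  refine (mem_supported K _).2 fun h hh => ?_
  rw [Finset.mem_coe, support_erase, Finset.mem_erase] at hh
  exact lt_of_le_of_ne ((mem_supported K v).1 hv hh.2) hh.1

namespace IsRedOp

variable {T T' : (G →₀ K) →ₗ[K] (G →₀ K)}

theorem apply_apply (hT : IsRedOp T) (x : G →₀ K) : T (T x) = T x :=
  LinearMap.congr_fun hT.1 x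

theorem apply_single_mem_supported_Iio (hT : IsRedOp T) {g : G} (hg : g ∉ NFset T) :
    T (single g 1) ∈ supported K K (Iio g) := by
  refine (mem_supported K _).2 fun h hh => ?_
  exact WithBot.coe_lt_coe.1 ((Finset.le_max hh).trans_lt ((hT.2 g).resolve_left hg))

theorem apply_single_mem_supported_Iic (hT : IsRedOp T) (g : G) :
    T (single g 1) ∈ supported K K (Iic g) := by
  by_cases hg : g ∈ NFset T
  · rw [show T (single g 1) = single g 1 from hg]
    exact single_mem_supported K _ self_mem_Iic
  · exact supported_mono Iio_subset_Iic_self (hT.apply_single_mem_supported_Iio hg)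

theorem map_supported_Iio_le (hT : IsRedOp T) (g : G) :
    (supported K K (Iio g)).map T ≤ supported K K (Iio g) := by
  refine Submodule.map_le_iff_le_comap.2
    ((supported_eq_span_single K _).trans_le (Submodule.span_le.2 ?_))
  rintro _ ⟨h, hh, rfl⟩
  exact supported_mono (Iic_subset_Iio.2 hh) (hT.apply_single_mem_supported_Iic h)

-- `v ∈ supported K K (Iic g) ∧ v g ≠ 0` says that `g` is the leading monomial of `v`.
theorem notMem_NFset_iff (hT : IsRedOp T) {g : G} :
    g ∉ NFset T ↔ ∃ v ∈ LinearMap.ker T, v ∈ supported K K (Iic g) ∧ v g ≠ 0 := by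
  constructor
  · intro hg
    have hlow := hT.apply_single_mem_supported_Iio hg
    have hTg : T (single g 1) g = 0 :=
      notMem_support_iff.1 fun hmem => lt_irrefl g ((mem_supported K _).1 hlow hmem)
    refine ⟨single g 1 - T (single g 1), ?_, ?_, ?_⟩
    · rw [LinearMap.mem_ker, map_sub, hT.apply_apply, sub_self]
    · exact Submodule.sub_mem _ (single_mem_supported K _ self_mem_Iic)
        (supported_mono Iio_subset_Iic_self hlow)
    · simp [hTg]
  · rintro ⟨v, hv, hvg, hv0⟩ hg
    have hlow : T (erase g v) ∈ supported K K (Iio g) :=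
      hT.map_supported_Iio_le g ⟨_, erase_mem_supported_Iio hvg, rfl⟩
    have hTv : T v = T (erase g v) + v g • single g 1 := by
      conv_lhs => rw [← erase_add_single g v, ← smul_single_one, map_add, map_smul, hg]
    have hcoeff := congr($hTv g)
    rw [LinearMap.mem_ker.1 hv, Finsupp.add_apply, (mem_supported' K _).1 hlow g (lt_irrefl g)]
      at hcoeff
    exact hv0 (by simpa using hcoeff.symm)

theorem NFset_subset_of_ker_le (hT : IsRedOp T) (hT' : IsRedOp T')
    (hker : LinearMap.ker T ≤ LinearMap.ker T') : NFset T' ⊆ NFset T := by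
  intro g hg'
  by_contra hg
  obtain ⟨v, hv, hvg⟩ := hT.notMem_NFset_iff.1 hg
  exact hT'.notMem_NFset_iff.2 ⟨v, hker hv, hvg⟩ hg'

end IsRedOp

end

section Family

variable {ι : Type*} {T : ι → (G →₀ K) →ₗ[K] (G →₀ K)}

theorem supported_Iio_le_iSup_ker_sup (hT : ∀ i, IsRedOp (T i)) (g : G) :
    supported K K (Iio g) ≤
      (⨆ i, LinearMap.ker (T i)) ⊔ supported K K ((⋂ i, NFset (T i)) ∩ Iio g) := by
  induction g using WellFoundedLT.induction with
  | _ g ih =>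
  rw [supported_eq_span_single, Submodule.span_le]
  rintro _ ⟨h, hhg : h < g, rfl⟩
  by_cases hS : h ∈ ⋂ i, NFset (T i)
  · exact Submodule.mem_sup_right (single_mem_supported K _ ⟨hS, hhg⟩)
  obtain ⟨i, hi⟩ : ∃ i, h ∉ NFset (T i) := by simpa using hS
  have hker : single h 1 - T i (single h 1) ∈ ⨆ i, LinearMap.ker (T i) :=
    Submodule.mem_iSup_of_mem i (by rw [LinearMap.mem_ker, map_sub, (hT i).apply_apply, sub_self])
  have hrest : supported K K (Iio h) ≤
      (⨆ i, LinearMap.ker (T i)) ⊔ supported K K ((⋂ i, NFset (T i)) ∩ Iio g) :=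
    (ih h hhg).trans
      (sup_le_sup_left (supported_mono (inter_subset_inter_right _ (Iio_subset_Iio hhg.le))) _)
  simpa using Submodule.add_mem _ (Submodule.mem_sup_left hker)
    (hrest ((hT i).apply_single_mem_supported_Iio hi))

theorem exists_mem_iSup_ker_supported (hT : ∀ i, IsRedOp (T i)) {g : G}
    (hg : g ∈ ⋂ i, NFset (T i)) {v : G →₀ K} (hv : v ∈ ⨆ i, LinearMap.ker (T i))
    (hvg : v ∈ supported K K (Iic g)) :
    ∃ v' ∈ ⨆ i, LinearMap.ker (T i), v' ∈ supported K K (⋂ i, NFset (T i)) ∧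
      v' ∈ supported K K (Iic g) ∧ v' g = v g := by
  obtain ⟨k, hk, s, hs, hks⟩ :=
    Submodule.mem_sup.1 (supported_Iio_le_iSup_ker_sup hT g (erase_mem_supported_Iio hvg))
  have hv' : v - k = s + single g (v g) := by
    rw [sub_eq_iff_eq_add, add_comm (s + _), ← add_assoc, hks, erase_add_single]
  refine ⟨v - k, Submodule.sub_mem _ hv hk, ?_, ?_, ?_⟩ <;> rw [hv']
  · exact Submodule.add_mem _ (supported_mono inter_subset_left hs) (single_mem_supported K _ hg)
  · exact Submodule.add_mem _ (supported_mono (Iio_subset_Iic_self.trans' inter_subset_right) hs)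
      (single_mem_supported K _ self_mem_Iic)
  · rw [Finsupp.add_apply, (mem_supported' K _).1 hs g fun h => lt_irrefl g h.2]
    simp

end Family

theorem completion_exists_general (n : ℕ)
    (T : Fin n → (G →₀ K) →ₗ[K] (G →₀ K)) (hT : ∀ i, IsRedOp (T i))
    (W T₀ Cf : (G →₀ K) →ₗ[K] (G →₀ K))
    (hW : IsRedOp W) (hCf : IsRedOp Cf)
    (hWker : LinearMap.ker W = ⨆ i, LinearMap.ker (T i))
    (hT₀ker : LinearMap.ker T₀ =
      Submodule.span K ((fun g => single g (1 : K)) '' ⋂ i, NFset (T i)))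
    (hCfker : LinearMap.ker Cf = LinearMap.ker W ⊓ LinearMap.ker T₀) :
    ((⋂ i, NFset (T i)) ∩ NFset Cf = NFset W) ∧
      LinearMap.ker W ⊔ LinearMap.ker Cf = LinearMap.ker W := by
  have hCfW : LinearMap.ker Cf ≤ LinearMap.ker W := hCfker ▸ inf_le_left
  refine ⟨Subset.antisymm ?_ ?_, sup_eq_left.2 hCfW⟩
  · rintro g ⟨hgS, hgCf⟩
    by_contra hgW
    obtain ⟨v, hv, hvg, hv0⟩ := hW.notMem_NFset_iff.1 hgW
    obtain ⟨v', hv'W, hv'S, hv'g, hv'v⟩ :=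
      exists_mem_iSup_ker_supported hT hgS (hWker ▸ hv) hvg
    refine hCf.notMem_NFset_iff.2 ⟨v', ?_, hv'g, hv'v ▸ hv0⟩ hgCf
    rw [hCfker, hWker, hT₀ker, ← supported_eq_span_single]
    exact ⟨hv'W, hv'S⟩
  · intro g hg
    refine ⟨mem_iInter.2 fun i => ?_, hCf.NFset_subset_of_ker_le hW hCfW hg⟩
    exact (hT i).NFset_subset_of_ker_le hW (hWker ▸ le_iSup (fun j => LinearMap.ker (T j)) i) hg

/-- With `W = ∧F`, `T₀` the reduction operator with kernel `K⟨NF(F)⟩` and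
`Cf = C^F = (∧F) ∨ T₀` (so `ker Cf = ker W ∩ ker T₀`), the set `F ∪ {C^F}` is a
completion of `F`: it is confluent (`NF(F) ∩ NF(C^F) = NF(∧F)`) and has the same
lower bound as `F` (`ker W + ker Cf = ker W`). -/
theorem completion_exists (n : ℕ)
    (T : Fin n → (G →₀ K) →ₗ[K] (G →₀ K)) (hT : ∀ i, IsRedOp (T i))
    (W T₀ Cf : (G →₀ K) →ₗ[K] (G →₀ K))
    (hW : IsRedOp W) (hT₀ : IsRedOp T₀) (hCf : IsRedOp Cf)
    (hWker : LinearMap.ker W = ⨆ i, LinearMap.ker (T i))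
    (hT₀ker : LinearMap.ker T₀ =
      Submodule.span K ((fun g => single g (1 : K)) '' ⋂ i, NFset (T i)))
    (hCfker : LinearMap.ker Cf = LinearMap.ker W ⊓ LinearMap.ker T₀) :
    ((⋂ i, NFset (T i)) ∩ NFset Cf = NFset W) ∧
      LinearMap.ker W ⊔ LinearMap.ker Cf = LinearMap.ker W :=
  completion_exists_general n T hT W T₀ Cf hW hCf hWker hT₀ker hCfker
end

section
/- Let F = {T₁, …, Tₙ} be a finite set of reduction operators relative to a finite well-ordered set (G,<). Order the basis {e_{i,g} : 1 ≤ i ≤ n, g T_i-reducible} of ker(T₁) × ⋯ × ker(Tₙ) lexicographically by (i,g). Then the set of leading terms of nonzero elements of syz(F) with respect to this order is exactly {e_{i,g} : 2 ≤ i ≤ n, g ∈ Red((T₁ ∧ ⋯ ∧ T_{i−1}) ∨ Tᵢ)}. -/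
open Finsupp

variable {K G : Type*} [Field K] [LinearOrder G] [Fintype G]

/-! A reduction operator `T` fixes the monomials outside `Red T` and sends each `g ∈ Red T` to
a combination of smaller monomials, so the top monomial of a nonzero element of `ker T` lies in
`Red T`, and conversely every `g ∈ Red T` is the top monomial of `g - T g ∈ ker T`.
Consequently `(i, g)` is the leading term of a syzygy `v` exactly when `vⱼ = 0` for `j > i`
and `g` is the top monomial of `vᵢ`. The `i`-th components of such syzygies,
`vᵢ = -(v₁ + ⋯ + v_{i-1})`, are exactly the elements of
`(ker T₁ + ⋯ + ker T_{i-1}) ∩ ker Tᵢ = ker Vᵢ`, whose top monomials form `Red Vᵢ`. -/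

namespace IsRedOp

omit [Fintype G]

variable {T : (G →₀ K) →ₗ[K] (G →₀ K)}

theorem apply_single_apply_eq_zero_of_le (hT : IsRedOp T) {g b : G}
    (hg : T (single g 1) ≠ single g 1) (hgb : g ≤ b) : T (single g 1) b = 0 := by
  by_contra hne
  have hlt : (b : WithBot G) < g :=
    (Finset.le_max (mem_support_iff.2 hne)).trans_lt ((hT.2 g).resolve_left hg)
  exact (WithBot.coe_lt_coe.1 hlt).not_ge hgb

theorem apply_single_apply_eq_zero_of_lt (hT : IsRedOp T) {g b : G} (hgb : g < b) :
    T (single g 1) b = 0 := by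
  by_cases hg : T (single g 1) = single g 1
  · rw [hg, single_eq_of_ne hgb.ne']
  · exact hT.apply_single_apply_eq_zero_of_le hg hgb.le

theorem apply_apply_of_mem_upperBounds (hT : IsRedOp T) {v : G →₀ K} {B : G}
    (hB : B ∈ upperBounds (v.support : Set G)) : T v B = v B * T (single B 1) B := by
  have hv : T v B = ∑ g ∈ v.support, v g * T (single g 1) B := by
    conv_lhs => rw [← v.sum_single, map_finsuppSum, Finsupp.sum_apply]
    refine Finset.sum_congr rfl fun g _ => ?_
    dsimp only
    rw [← smul_single_one g (v g), map_smul, Finsupp.smul_apply, smul_eq_mul]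
  rw [hv, Finset.sum_eq_single B]
  · intro g hg hgB
    rw [hT.apply_single_apply_eq_zero_of_lt ((hB hg).lt_of_ne hgB), mul_zero]
  · intro hB
    rw [notMem_support_iff.1 hB, zero_mul]

theorem apply_single_ne_of_isGreatest (hT : IsRedOp T) {v : G →₀ K} (hv : T v = 0) {B : G}
    (hB : IsGreatest (v.support : Set G) B) : T (single B 1) ≠ single B 1 := by
  intro hfix
  have h := hT.apply_apply_of_mem_upperBounds hB.2
  rw [hv, hfix, single_eq_same, mul_one, Finsupp.zero_apply] at h
  exact mem_support_iff.1 hB.1 h.symm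

theorem exists_isGreatest_support (hT : IsRedOp T) {v : G →₀ K} (hv : T v = 0) (hv0 : v ≠ 0) :
    ∃ B, T (single B 1) ≠ single B 1 ∧ IsGreatest (v.support : Set G) B :=
  have hB := v.support.isGreatest_max' (support_nonempty_iff.2 hv0)
  ⟨_, hT.apply_single_ne_of_isGreatest hv hB, hB⟩

theorem eq_zero_of_forall_apply_eq_zero (hT : IsRedOp T) {v : G →₀ K} (hv : T v = 0)
    (h : ∀ g, T (single g 1) ≠ single g 1 → v g = 0) : v = 0 := by
  by_contra hv0
  obtain ⟨B, hB, hBv⟩ := hT.exists_isGreatest_support hv hv0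
  exact mem_support_iff.1 hBv.1 (h B hB)

theorem apply_sub_apply_self (hT : IsRedOp T) (x : G →₀ K) : T (x - T x) = 0 := by
  rw [map_sub, ← LinearMap.comp_apply, hT.1, sub_self]

theorem isGreatest_support_single_sub (hT : IsRedOp T) {g : G}
    (hg : T (single g 1) ≠ single g 1) :
    IsGreatest ((single g 1 - T (single g 1)).support : Set G) g := by
  refine ⟨?_, fun b hb => not_lt.1 fun hgb => ?_⟩
  · simp [mem_support_iff, hT.apply_single_apply_eq_zero_of_le hg le_rfl]
  · simp [mem_support_iff, single_eq_of_ne hgb.ne',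
      hT.apply_single_apply_eq_zero_of_lt hgb] at hb

end IsRedOp

section LeadingTerm

omit [Fintype G]

variable {ι : Type*} [LinearOrder ι]

/-- The coefficient of `e_{i,g}` in `v ∈ ker T₁ × ⋯ × ker Tₙ` is `v i g`. -/
def IsLeadingTerm (T : ι → (G →₀ K) →ₗ[K] (G →₀ K)) (v : ι → G →₀ K) (p : ι × G) : Prop :=
  T p.1 (single p.2 1) ≠ single p.2 1 ∧ v p.1 p.2 ≠ 0 ∧
    ∀ q : ι × G, T q.1 (single q.2 1) ≠ single q.2 1 → v q.1 q.2 ≠ 0 → toLex q ≤ toLex p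

theorem isLeadingTerm_iff {T : ι → (G →₀ K) →ₗ[K] (G →₀ K)} (hT : ∀ i, IsRedOp (T i))
    {v : ι → G →₀ K} (hv : ∀ j, T j (v j) = 0) {i : ι} {g : G} :
    IsLeadingTerm T v (i, g) ↔
      (∀ j, i < j → v j = 0) ∧ IsGreatest ((v i).support : Set G) g := by
  constructor
  · rintro ⟨-, hvig, hlead⟩
    have hle (j : ι) (h : G) (hred : T j (single h 1) ≠ single h 1) (hne : v j h ≠ 0) :
        j < i ∨ j = i ∧ h ≤ g :=
      Prod.Lex.le_iff.1 (hlead (j, h) hred hne)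
    refine ⟨fun j hij => (hT j).eq_zero_of_forall_apply_eq_zero (hv j) fun h hred => ?_,
      mem_support_iff.2 hvig, ?_⟩
    · by_contra hne
      rcases hle j h hred hne with hji | ⟨rfl, -⟩
      · exact lt_asymm hij hji
      · exact lt_irrefl _ hij
    · obtain ⟨B, hB, hBv⟩ :=
        (hT i).exists_isGreatest_support (hv i) (ne_of_apply_ne (· g) hvig)
      have hBg : B ≤ g := by
        rcases hle i B hB (mem_support_iff.1 hBv.1) with hii | ⟨-, hBg⟩
        · exact absurd hii (lt_irrefl i)
        · exact hBg
      exact fun b hb => (hBv.2 hb).trans hBg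
  · rintro ⟨hzero, hg⟩
    refine ⟨(hT i).apply_single_ne_of_isGreatest (hv i) hg, mem_support_iff.1 hg.1,
      fun ⟨j, h⟩ _ hne => Prod.Lex.le_iff.2 ?_⟩
    rcases lt_trichotomy j i with hji | rfl | hij
    · exact Or.inl hji
    · exact Or.inr ⟨rfl, hg.2 (mem_support_iff.2 hne)⟩
    · exact absurd (by rw [hzero j hij, Finsupp.zero_apply]) hne

end LeadingTerm

section Syzygies

omit [LinearOrder G] [Fintype G]

variable {n : ℕ} {T : Fin n → (G →₀ K) →ₗ[K] (G →₀ K)}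

theorem mem_syzMod_iff {v : Fin n → G →₀ K} :
    v ∈ SyzMod T ↔ (∀ j, T j (v j) = 0) ∧ ∑ j, v j = 0 := by
  simp [SyzMod, Submodule.mem_iInf, LinearMap.sum_apply]

theorem mem_iSup_ker_of_mem_syzMod {v : Fin n → G →₀ K} (hv : v ∈ SyzMod T) {i : Fin n}
    (hvi : ∀ j, i < j → v j = 0) : v i ∈ ⨆ j, ⨆ _ : j < i, LinearMap.ker (T j) := by
  obtain ⟨hker, hsum⟩ := mem_syzMod_iff.1 hv
  have hvi_eq : v i = -∑ j ∈ Finset.univ.erase i, v j :=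
    eq_neg_of_add_eq_zero_left (by rwa [Finset.add_sum_erase _ _ (Finset.mem_univ i)])
  rw [hvi_eq]
  refine neg_mem (Submodule.sum_mem _ fun j hj => ?_)
  rcases lt_or_gt_of_ne (Finset.ne_of_mem_erase hj) with hji | hij
  · exact Submodule.mem_iSup_of_mem j (Submodule.mem_iSup_of_mem hji (hker j))
  · rw [hvi j hij]
    exact zero_mem _

theorem exists_mem_syzMod_of_mem_iSup_ker {i : Fin n} {w : G →₀ K}
    (hw : w ∈ ⨆ j, ⨆ _ : j < i, LinearMap.ker (T j)) (hTw : T i w = 0) :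
    ∃ u ∈ SyzMod T, u i = w ∧ ∀ j, i < j → u j = 0 := by
  obtain ⟨f, hf, hfw⟩ := (Submodule.mem_iSup_iff_exists_finsupp _ _).1 hw
  have hf_zero (j : Fin n) (hj : ¬ j < i) : f j = 0 := by
    simpa [iSup_neg hj] using hf j
  have hf_ker (j : Fin n) : T j (f j) = 0 := by
    by_cases hj : j < i
    · simpa [iSup_pos hj] using hf j
    · rw [hf_zero j hj, map_zero]
  refine ⟨Pi.single i w - ⇑f, mem_syzMod_iff.2 ⟨fun j => ?_, ?_⟩, ?_, fun j hij => ?_⟩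
  · rcases eq_or_ne j i with rfl | hji
    · simp [hTw, hf_ker]
    · simp [hji, hf_ker]
  · rw [Pi.sub_def, Finset.sum_sub_distrib, Finset.sum_pi_single', if_pos (Finset.mem_univ i),
      ← hfw, Finsupp.sum_fintype _ _ fun _ => rfl, sub_self]
  · simp [hf_zero i (lt_irrefl i)]
  · simp [hij.ne', hf_zero j hij.not_gt]

end Syzygies

/-- Indices are `0`-based, so the paper's `2 ≤ i` reads `1 ≤ i`; the operator
`Vᵢ = (T₁ ∧ ⋯ ∧ T_{i-1}) ∨ Tᵢ` is specified through its kernel. -/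
theorem leading_terms_of_syzygies (n : ℕ)
    (T : Fin n → (G →₀ K) →ₗ[K] (G →₀ K)) (hT : ∀ i, IsRedOp (T i))
    (V : Fin n → (G →₀ K) →ₗ[K] (G →₀ K)) (hV : ∀ i, IsRedOp (V i))
    (hVker : ∀ i, LinearMap.ker (V i) =
      (⨆ j : Fin n, ⨆ _ : j < i, LinearMap.ker (T j)) ⊓ LinearMap.ker (T i)) :
    {p : Fin n × G | ∃ v ∈ SyzMod T, v ≠ 0 ∧
        T p.1 (single p.2 1) ≠ single p.2 1 ∧ v p.1 p.2 ≠ 0 ∧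
        ∀ q : Fin n × G, T q.1 (single q.2 1) ≠ single q.2 1 → v q.1 q.2 ≠ 0 →
          toLex q ≤ toLex p} =
      {p : Fin n × G | 1 ≤ (p.1 : ℕ) ∧ V p.1 (single p.2 1) ≠ single p.2 1} := by
  ext ⟨i, g⟩
  constructor
  · rintro ⟨v, hv, -, hlead⟩
    have hker := (mem_syzMod_iff.1 hv).1
    obtain ⟨hupper, hg⟩ := (isLeadingTerm_iff hT hker).1 hlead
    have hvi := mem_iSup_ker_of_mem_syzMod hv hupper
    have hi : 1 ≤ (i : ℕ) := by
      by_contra! hi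
      have hnone (j : Fin n) : ¬ j < i := by rw [Fin.lt_def]; omega
      simp only [hnone, iSup_false, iSup_bot, Submodule.mem_bot] at hvi
      exact mem_support_iff.1 hg.1 (by rw [hvi]; rfl)
    have hVvi : V i (v i) = 0 := by
      rw [← LinearMap.mem_ker, hVker i]
      exact ⟨hvi, hker i⟩
    exact ⟨hi, (hV i).apply_single_ne_of_isGreatest hVvi hg⟩
  · rintro ⟨-, hred⟩
    have hw : single g 1 - V i (single g 1) ∈ LinearMap.ker (V i) :=
      (hV i).apply_sub_apply_self _
    rw [hVker i] at hw
    obtain ⟨u, hu, hui, hupper⟩ := exists_mem_syzMod_of_mem_iSup_ker hw.1 hw.2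
    have hg : IsGreatest ((u i).support : Set G) g :=
      hui ▸ (hV i).isGreatest_support_single_sub hred
    refine ⟨u, hu, fun hu0 => mem_support_iff.1 hg.1 (by rw [hu0]; rfl), ?_⟩
    exact (isLeadingTerm_iff hT (mem_syzMod_iff.1 hu).1).2 ⟨hupper, hg⟩
end
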